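/- Fix n ≥ 3 and 1 ≤ d ≤ n−1. Let c_{(d)} be the affine permutation of size n given by c_{(d)}(j) = j − n + d − 1 if j ≡ 1 (mod n), c_{(d)}(j) = j − 1 if j ≡ 2,…,d (mod n), c_{(d)}(j) = j + 1 if j ≡ d+1,…,n−1 (mod n), and c_{(d)}(j) = j + d + 1 if j ≡ 0 (mod n). Then for every integer K ≥ 1 and every j ∈ ℤ: c_{(d)}^K(j) < j if j ≡ 1,…,d (mod n), and c_{(d)}^K(j) > j if j ≡ d+1,…,n (mod n). In particular c_{(d)}^K has no fixed points. -/

import Mathlib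

/-! The residues `1, …, d` mod `n` are exactly those on which `c_{(d)}` moves an integer down,
and `c_{(d)}` maps both this residue class and its complement into themselves.
So along any orbit every step goes in the same direction. -/

namespace AffineA

/-- The Coxeter element `c_{(d)}` of the affine symmetric group, viewed as an affine
permutation (a bijection `ℤ → ℤ`): `c_{(d)}(j) = j - n + d - 1` if `j ≡ 1 (mod n)`,
`j - 1` if `j ≡ 2, …, d (mod n)`, `j + 1` if `j ≡ d+1, …, n-1 (mod n)`, and
`j + d + 1` if `j ≡ 0 (mod n)`. -/
def cox (n d : ℕ) (j : ℤ) : ℤ :=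
  if j % (n : ℤ) = 0 then j + d + 1
  else if j % (n : ℤ) = 1 then j - n + d - 1
  else if j % (n : ℤ) ≤ (d : ℤ) then j - 1
  else j + 1

end AffineA

theorem Function.iterate_lt_self_of_mapsTo {α : Type*} [Preorder α] {f : α → α} {s : Set α}
    (hs : Set.MapsTo f s s) (hf : ∀ x ∈ s, f x < x) {x : α} (hx : x ∈ s) {K : ℕ} (hK : 1 ≤ K) :
    f^[K] x < x := by
  induction K, hK using Nat.le_induction with
  | base => exact hf x hx
  | succ K _ ih =>
    rw [Function.iterate_succ_apply']
    exact (hf _ (hs.iterate K hx)).trans ih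

theorem Function.lt_iterate_self_of_mapsTo {α : Type*} [Preorder α] {f : α → α} {s : Set α}
    (hs : Set.MapsTo f s s) (hf : ∀ x ∈ s, x < f x) {x : α} (hx : x ∈ s) {K : ℕ} (hK : 1 ≤ K) :
    x < f^[K] x :=
  Function.iterate_lt_self_of_mapsTo (α := αᵒᵈ) hs hf hx hK

theorem Int.emod_eq_of_sub_eq_mul {a r n k : ℤ} (h : a - r = n * k) (h0 : 0 ≤ r) (h1 : r < n) :
    a % n = r := by
  rw [show a = r + n * k by linarith, Int.add_mul_emod_self_left, Int.emod_eq_of_lt h0 h1]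

namespace AffineA

def lowResidues (n d : ℕ) : Set ℤ := {j | 1 ≤ j % (n : ℤ) ∧ j % (n : ℤ) ≤ d}

variable {n d : ℕ} {j : ℤ}

theorem mem_lowResidues : j ∈ lowResidues n d ↔ 1 ≤ j % (n : ℤ) ∧ j % (n : ℤ) ≤ d := Iff.rfl

theorem cox_lt_self (hdn : d ≤ n) (hj : j ∈ lowResidues n d) : cox n d j < j := by
  obtain ⟨hpos, hle⟩ := hj
  unfold cox
  split_ifs <;> omega

theorem lt_cox_self (hd : 1 ≤ d) (hdn : d < n) (hj : j ∉ lowResidues n d) : j < cox n d j := by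
  rw [mem_lowResidues, not_and, not_le] at hj
  have := Int.emod_nonneg j (by omega : (n : ℤ) ≠ 0)
  unfold cox
  split_ifs <;> omega

theorem mapsTo_cox_lowResidues (hd : 1 ≤ d) (hdn : d < n) :
    Set.MapsTo (cox n d) (lowResidues n d) (lowResidues n d) := by
  intro j ⟨hpos, hle⟩
  have hdiv := Int.emod_add_mul_ediv j n
  unfold cox
  split_ifs with hzero hone
  · omega
  · rw [mem_lowResidues, Int.emod_eq_of_sub_eq_mul (r := d) (k := j / n - 1)
      (by linear_combination -hdiv + hone) (by omega) (by omega)]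
    omega
  · rw [mem_lowResidues, Int.emod_eq_of_sub_eq_mul (r := j % n - 1) (k := j / n)
      (by linear_combination -hdiv) (by omega) (by omega)]
    omega

theorem mapsTo_cox_compl_lowResidues (hd : 1 ≤ d) (hdn : d < n) :
    Set.MapsTo (cox n d) (lowResidues n d)ᶜ (lowResidues n d)ᶜ := by
  intro j hj
  simp only [Set.mem_compl_iff, mem_lowResidues, not_and, not_le] at hj ⊢
  have hdiv := Int.emod_add_mul_ediv j n
  have hlt := Int.emod_lt_of_pos j (by omega : (0 : ℤ) < n)
  have hnonneg := Int.emod_nonneg j (by omega : (n : ℤ) ≠ 0)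
  unfold cox
  split_ifs with hzero
  · rcases (show (d : ℤ) + 1 < n ∨ (d : ℤ) + 1 = n by omega) with hsucc | heq
    · rw [Int.emod_eq_of_sub_eq_mul (r := d + 1) (k := j / n)
        (by linear_combination -hdiv + hzero) (by omega) hsucc]
      omega
    · rw [Int.emod_eq_of_sub_eq_mul (r := 0) (k := j / n + 1)
        (by linear_combination -hdiv + hzero + heq) le_rfl (by omega)]
      omega
  · omega
  · omega
  · rcases (show j % n + 1 < n ∨ j % n + 1 = n by omega) with hsucc | heq
    · rw [Int.emod_eq_of_sub_eq_mul (r := j % n + 1) (k := j / n)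
        (by linear_combination -hdiv) (by omega) hsucc]
      omega
    · rw [Int.emod_eq_of_sub_eq_mul (r := 0) (k := j / n + 1)
        (by linear_combination -hdiv + heq) le_rfl (by omega)]
      omega

end AffineA

open AffineA

theorem cox_pow_no_fixed_points (n d : ℕ) (hd1 : 1 ≤ d) (hd2 : d ≤ n - 1) :
    ∀ K : ℕ, 1 ≤ K → ∀ j : ℤ,
      ((1 ≤ j % (n : ℤ) ∧ j % (n : ℤ) ≤ (d : ℤ)) → (cox n d)^[K] j < j) ∧
      ((j % (n : ℤ) = 0 ∨ (d : ℤ) < j % (n : ℤ)) → j < (cox n d)^[K] j) ∧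
      (cox n d)^[K] j ≠ j := by
  intro K hK j
  have hdn : d < n := by omega
  have descend : j ∈ lowResidues n d → (cox n d)^[K] j < j :=
    fun hj => Function.iterate_lt_self_of_mapsTo (mapsTo_cox_lowResidues hd1 hdn)
      (fun _ => cox_lt_self hdn.le) hj hK
  have ascend : j ∉ lowResidues n d → j < (cox n d)^[K] j :=
    fun hj => Function.lt_iterate_self_of_mapsTo (mapsTo_cox_compl_lowResidues hd1 hdn)
      (fun _ => lt_cox_self hd1 hdn) hj hK
  refine ⟨descend, fun hj => ascend fun ⟨hpos, hle⟩ => by omega, ?_⟩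
  by_cases hj : j ∈ lowResidues n d
  · exact (descend hj).ne
  · exact (ascend hj).ne'
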